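/- arXiv:2310.11528 — 7 statements merged into one kernel-verified Lean document; each statement's English description precedes it below -/
import Mathlib

section
/- Let (ε_N) be a sequence in [0,1) with ε_N → 0. For every real a and every z ∈ ℂ, the sequence T_N^ε[a](z) = exp(i·ε_N·z)·(cos(z(1−ε_N)/N) + i·a·sin(z(1−ε_N)/N))^N converges to exp(iaz) as N → ∞, uniformly on compact subsets of ℂ. -/
/-!
With `w = z (1 - ε) / N` we have `cos w + i a sin w = 1 + i a w + O(w²)`, hence
`log (cos w + i a sin w) = i a w + O(w²)` and
`T_N = exp (i ε z + N log (cos w + i a sin w)) = exp (i a z + i ε z (1 - a) + O(|z|² / N))`.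
For bounded `z` both error terms tend to `0`, so uniform convergence on the compact set `K`,
read as convergence along `atTop ×ˢ 𝓟 K`, follows from the continuity of `exp` at `0`.
-/

open Complex Filter Topology Asymptotics

theorem tendstoUniformlyOn_iff_tendsto_sub {ι α G : Type*} [UniformSpace G] [AddGroup G]
    [IsUniformAddGroup G] {F : ι → α → G} {f : α → G} {p : Filter ι} {s : Set α} :
    TendstoUniformlyOn F f p s ↔
      Tendsto (fun q : ι × α => F q.1 q.2 - f q.2) (p ×ˢ 𝓟 s) (𝓝 0) := by
  rw [tendstoUniformlyOn_iff_tendsto, uniformity_eq_comap_nhds_zero, tendsto_comap_iff]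
  rfl

theorem Complex.isBigO_exp_sub_one_sub_self :
    (fun x => exp x - 1 - x) =O[𝓝 0] fun x => x ^ 2 := by
  refine isBigO_iff.2 ⟨1, ?_⟩
  filter_upwards [eventually_norm_sub_lt 0 one_pos] with x hx
  rw [sub_zero] at hx
  simpa using norm_exp_sub_one_sub_id_le hx.le

theorem cos_add_I_mul_sin_sub_one_sub_eq (a w : ℂ) :
    cos w + I * a * sin w - 1 - I * a * w =
      (1 + a) / 2 * (exp (I * w) - 1 - I * w) +
        (1 - a) / 2 * (exp (-(I * w)) - 1 - -(I * w)) := by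
  rw [Complex.cos, Complex.sin]
  ring_nf
  simp only [I_sq]
  ring

theorem isBigO_cos_add_I_mul_sin_sub_one_sub (a : ℂ) :
    (fun w => cos w + I * a * sin w - 1 - I * a * w) =O[𝓝 0] fun w => w ^ 2 := by
  have hI : Tendsto (fun w : ℂ => I * w) (𝓝 0) (𝓝 0) := by
    simpa using (continuous_const_mul I).tendsto 0
  have hplus : (fun w => exp (I * w) - 1 - I * w) =O[𝓝 0] fun w => w ^ 2 :=
    (isBigO_exp_sub_one_sub_self.comp_tendsto hI).trans
      (isBigO_of_le _ fun w => by simp [mul_pow])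
  have hminus : (fun w => exp (-(I * w)) - 1 - -(I * w)) =O[𝓝 0] fun w => w ^ 2 :=
    (isBigO_exp_sub_one_sub_self.comp_tendsto (by simpa using hI.neg)).trans
      (isBigO_of_le _ fun w => by simp [mul_pow])
  simp only [cos_add_I_mul_sin_sub_one_sub_eq]
  exact (hplus.const_mul_left _).add (hminus.const_mul_left _)

theorem isBigO_log_cos_add_I_mul_sin_sub (a : ℂ) :
    (fun w => log (cos w + I * a * sin w) - I * a * w) =O[𝓝 0] fun w => w ^ 2 := by
  set u : ℂ → ℂ := fun w => cos w + I * a * sin w - 1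
  have hu : (fun w => u w - I * a * w) =O[𝓝 0] fun w => w ^ 2 :=
    isBigO_cos_add_I_mul_sin_sub_one_sub a
  have hu_lin : u =O[𝓝 0] fun w => w := by
    simpa [u] using (hu.trans (isLittleO_pow_id one_lt_two).isBigO).add
      ((isBigO_refl (fun w : ℂ => w) _).const_mul_left (I * a))
  have hu0 : Tendsto u (𝓝 0) (𝓝 0) := hu_lin.trans_tendsto tendsto_id
  have hlog := (log_sub_self_isBigO.comp_tendsto hu0).trans (hu_lin.pow 2)
  refine (hlog.add hu).congr_left fun w => ?_
  simp only [Function.comp_apply, u, add_sub_cancel]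
  ring

theorem tendsto_cexp_sub_cexp {β : Type*} {l : Filter β} {φ ψ : β → ℂ}
    (hψ : IsBoundedUnder (· ≤ ·) l fun q => ‖ψ q‖)
    (h : Tendsto (fun q => φ q - ψ q) l (𝓝 0)) :
    Tendsto (fun q => exp (φ q) - exp (ψ q)) l (𝓝 0) := by
  have hexp : Tendsto (fun q => exp (φ q - ψ q) - 1) l (𝓝 0) := by
    simpa using ((continuous_exp.tendsto 0).comp h).sub_const 1
  have hbdd : IsBoundedUnder (· ≤ ·) l fun q => ‖exp (ψ q)‖ :=
    (Real.exp_monotone.isBoundedUnder_le_comp hψ).mono_le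
      (Eventually.of_forall fun q => norm_exp_le_exp_norm (ψ q))
  refine (hexp.zero_mul_isBoundedUnder_le hbdd).congr fun q => ?_
  rw [sub_mul, ← exp_add, sub_add_cancel, one_mul]

/-- The paper's `T_N^ε[a](z)`. -/
noncomputable def superoscillation (ε a : ℂ) (N : ℕ) (z : ℂ) : ℂ :=
  exp (I * ε * z) * (cos (z * (1 - ε) / N) + I * a * sin (z * (1 - ε) / N)) ^ N

theorem tendsto_superoscillation_sub_exp {β : Type*} {l : Filter β} {N : β → ℕ}
    {ε z : β → ℂ} (a : ℂ) (hN : Tendsto N l atTop) (hε : Tendsto ε l (𝓝 0))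
    (hz : IsBoundedUnder (· ≤ ·) l fun q => ‖z q‖) :
    Tendsto (fun q => superoscillation (ε q) a (N q) (z q) - exp (I * a * z q)) l (𝓝 0) := by
  set w : β → ℂ := fun q => z q * (1 - ε q) / N q
  have hz1 : z =O[l] fun _ => (1 : ℂ) := (isBigO_one_iff ℂ).2 hz
  have hζ : (fun q => z q * (1 - ε q)) =O[l] fun _ => (1 : ℂ) := by
    simpa using hz1.mul ((tendsto_const_nhds.sub hε).isBigO_one ℂ)
  have hinv : Tendsto (fun q => (N q : ℂ)⁻¹) l (𝓝 0) :=
    tendsto_inv_atTop_nhds_zero_nat.comp hN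
  have hN0 : ∀ᶠ q in l, (N q : ℂ) ≠ 0 := by
    filter_upwards [hN.eventually_ne_atTop 0] with q hq using Nat.cast_ne_zero.2 hq
  have hw : Tendsto w l (𝓝 0) :=
    (hζ.mul (isBigO_refl _ _)).trans_tendsto (by simpa using hinv)
  have hNw : Tendsto (fun q => N q * w q ^ 2) l (𝓝 0) := by
    refine (((hζ.pow 2).mul (isBigO_refl _ _)).congr' ?_ EventuallyEq.rfl).trans_tendsto
      (by simpa using hinv)
    filter_upwards [hN0] with q hq
    simp only [w]
    field_simp
  have hlog : Tendsto (fun q => N q * (log (cos (w q) + I * a * sin (w q)) - I * a * w q))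
      l (𝓝 0) :=
    ((isBigO_refl _ _).mul ((isBigO_log_cos_add_I_mul_sin_sub a).comp_tendsto hw)).trans_tendsto
      hNw
  have hexponent : Tendsto (fun q =>
      (I * ε q * z q + N q * log (cos (w q) + I * a * sin (w q))) - I * a * z q) l (𝓝 0) := by
    have h := hlog.add ((hε.zero_mul_isBoundedUnder_le hz).const_mul (I * (1 - a)))
    rw [mul_zero, add_zero] at h
    refine h.congr' ?_
    filter_upwards [hN0] with q hq
    simp only [w]
    field_simp
    ring
  have hbase : ∀ᶠ q in l, cos (w q) + I * a * sin (w q) ≠ 0 := by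
    have : Tendsto (fun q => cos (w q) + I * a * sin (w q)) l (𝓝 (cos 0 + I * a * sin 0)) :=
      ((by fun_prop : Continuous fun w => cos w + I * a * sin w).tendsto 0).comp hw
    simpa using this.eventually_ne (by simp)
  refine (tendsto_cexp_sub_cexp ((isBigO_one_iff ℂ).1 (hz1.const_mul_left (I * a)))
    hexponent).congr' ?_
  filter_upwards [hbase] with q hq
  rw [superoscillation, exp_add, exp_nat_mul, exp_log hq]

theorem stmt2_general (ε : ℕ → ℝ)
    (hε0 : Filter.Tendsto ε Filter.atTop (nhds 0)) (a : ℝ)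
    (K : Set ℂ) (hK : IsCompact K) :
    TendstoUniformlyOn
      (fun (N : ℕ) (z : ℂ) =>
        Complex.exp (Complex.I * (ε N : ℂ) * z) *
          (Complex.cos (z * (1 - (ε N : ℂ)) / (N : ℂ)) +
              Complex.I * (a : ℂ) * Complex.sin (z * (1 - (ε N : ℂ)) / (N : ℂ))) ^ N)
      (fun z => Complex.exp (Complex.I * (a : ℂ) * z)) Filter.atTop K := by
  obtain ⟨R, hR⟩ := hK.isBounded.exists_norm_le
  rw [tendstoUniformlyOn_iff_tendsto_sub]
  refine tendsto_superoscillation_sub_exp (N := Prod.fst) (ε := fun q => (ε q.1 : ℂ))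
    (z := Prod.snd) a tendsto_fst ?_ ?_
  · simpa using (hε0.comp tendsto_fst).ofReal
  · exact isBoundedUnder_of_eventually_le (tendsto_snd.eventually (eventually_principal.2 hR))

theorem stmt2 (ε : ℕ → ℝ) (hε : ∀ N, ε N ∈ Set.Ico (0 : ℝ) 1)
    (hε0 : Filter.Tendsto ε Filter.atTop (nhds 0)) (a : ℝ)
    (K : Set ℂ) (hK : IsCompact K) :
    TendstoUniformlyOn
      (fun (N : ℕ) (z : ℂ) =>
        Complex.exp (Complex.I * (ε N : ℂ) * z) *
          (Complex.cos (z * (1 - (ε N : ℂ)) / (N : ℂ)) +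
              Complex.I * (a : ℂ) * Complex.sin (z * (1 - (ε N : ℂ)) / (N : ℂ))) ^ N)
      (fun z => Complex.exp (Complex.I * (a : ℂ) * z)) Filter.atTop K :=
  stmt2_general ε hε0 a K hK
end

section
/- Let (ε_N) be a sequence in [0,1) with ε_N → 0 and let K ⊆ ℝ be compact. Then the convergence of T_N^ε[a](z) = exp(i·ε_N·z)·(cos(z(1−ε_N)/N) + i·a·sin(z(1−ε_N)/N))^N to exp(iaz) is uniform jointly in a ∈ K and z in any compact subset of ℂ. -/
/-!
With `w = z (1 - ε) / N`, the factor `u = cos w + i a sin w` agrees with `v = exp (i a w)` up to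
`O(‖w‖²) = O(1/N²)`, and both have norm at most `exp (O(1/N))`; telescoping `u ^ N - v ^ N`
therefore gives an error `O(1/N)`. The remaining factor satisfies
`exp (i ε z) v ^ N = exp (i a z) exp (i ε z (1 - a)) = exp (i a z) (1 + O(ε))`.
All constants depend only on bounds for `|a|` and `‖z‖`, which compactness provides.
-/

open Complex Filter Topology

theorem norm_pow_sub_pow_le {R : Type*} [NormedCommRing R] [NormOneClass R] {u v : R} {M : ℝ}
    (hu : ‖u‖ ≤ M) (hv : ‖v‖ ≤ M) (n : ℕ) :
    ‖u ^ n - v ^ n‖ ≤ n * M ^ (n - 1) * ‖u - v‖ := by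
  have hM : 0 ≤ M := (norm_nonneg u).trans hu
  have hterm : ∀ i ∈ Finset.range n, ‖u ^ i * v ^ (n - 1 - i)‖ ≤ M ^ (n - 1) := fun i hi => by
    calc ‖u ^ i * v ^ (n - 1 - i)‖ ≤ M ^ i * M ^ (n - 1 - i) :=
          (norm_mul_le _ _).trans (mul_le_mul ((norm_pow_le u i).trans (by gcongr))
            ((norm_pow_le v _).trans (by gcongr)) (norm_nonneg _) (by positivity))
      _ = M ^ (n - 1) := by
          rw [← pow_add, Nat.add_sub_of_le (Nat.le_sub_one_of_lt (Finset.mem_range.1 hi))]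
  rw [← geom_sum₂_mul]
  refine (norm_mul_le _ _).trans (mul_le_mul_of_nonneg_right ?_ (norm_nonneg _))
  simpa using (norm_sum_le _ _).trans (Finset.sum_le_sum hterm)

theorem tendstoUniformlyOn_of_dist_le {ι α β : Type*} [PseudoMetricSpace β] {F : ι → α → β}
    {f : α → β} {l : Filter ι} {s : Set α} {b : ι → ℝ} (hb : Tendsto b l (𝓝 0))
    (h : ∀ᶠ n in l, ∀ x ∈ s, dist (f x) (F n x) ≤ b n) : TendstoUniformlyOn F f l s := by
  refine Metric.tendstoUniformlyOn_iff.2 fun δ hδ => ?_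
  filter_upwards [h, hb.eventually (gt_mem_nhds hδ)] with n hn hbn x hx
  exact (hn x hx).trans_lt hbn

namespace Complex

theorem norm_one_add_ofReal_le (a : ℝ) : ‖1 + (a : ℂ)‖ ≤ 1 + |a| := by
  simpa using norm_add_le (1 : ℂ) a

theorem norm_one_sub_ofReal_le (a : ℝ) : ‖1 - (a : ℂ)‖ ≤ 1 + |a| := by
  simpa using norm_sub_le (1 : ℂ) a

theorem norm_I_mul_ofReal_mul (a : ℝ) (w : ℂ) : ‖I * a * w‖ = |a| * ‖w‖ := by
  simp

/- `cos w + I a sin w = (1 + a)/2 · exp (I w) + (1 - a)/2 · exp (-I w)`, and the terms of order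
`≤ 1` of both exponentials, like those of `exp (I a w)`, add up to `1 + I a w`. -/
theorem norm_cos_add_I_mul_sin_sub_exp_le (a : ℝ) {w : ℂ} (hw : ‖w‖ ≤ 1)
    (haw : |a| * ‖w‖ ≤ 1) :
    ‖cos w + I * a * sin w - exp (I * a * w)‖ ≤ (1 + |a|) ^ 2 * ‖w‖ ^ 2 := by
  have hsplit : cos w + I * a * sin w - exp (I * a * w)
      = (1 + a) / 2 * (exp (w * I) - 1 - w * I) + (1 - a) / 2 * (exp (-w * I) - 1 - -w * I)
        - (exp (I * a * w) - 1 - I * a * w) := by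
    rw [exp_mul_I, exp_mul_I, cos_neg, sin_neg]
    ring
  have hplus : ‖exp (w * I) - 1 - w * I‖ ≤ ‖w‖ ^ 2 := by
    simpa using norm_exp_sub_one_sub_id_le (x := w * I) (by simpa using hw)
  have hminus : ‖exp (-w * I) - 1 - -w * I‖ ≤ ‖w‖ ^ 2 := by
    simpa using norm_exp_sub_one_sub_id_le (x := -w * I) (by simpa using hw)
  have hexp : ‖exp (I * a * w) - 1 - I * a * w‖ ≤ (|a| * ‖w‖) ^ 2 := by
    simpa only [norm_I_mul_ofReal_mul] using
      norm_exp_sub_one_sub_id_le (x := I * a * w) (by rwa [norm_I_mul_ofReal_mul])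
  rw [hsplit]
  refine (norm_sub_le _ _).trans ((add_le_add_left (norm_add_le _ _) _).trans ?_)
  simp only [norm_mul, norm_div, Complex.norm_two]
  calc ‖1 + (a : ℂ)‖ / 2 * ‖exp (w * I) - 1 - w * I‖
        + ‖1 - (a : ℂ)‖ / 2 * ‖exp (-w * I) - 1 - -w * I‖ + ‖exp (I * a * w) - 1 - I * a * w‖
      ≤ (1 + |a|) / 2 * ‖w‖ ^ 2 + (1 + |a|) / 2 * ‖w‖ ^ 2 + (|a| * ‖w‖) ^ 2 := by
        gcongr
        exacts [norm_one_add_ofReal_le a, norm_one_sub_ofReal_le a]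
    _ ≤ (1 + |a|) ^ 2 * ‖w‖ ^ 2 := by nlinarith [abs_nonneg a, sq_nonneg ‖w‖]

theorem norm_cos_add_I_mul_sin_pow_sub_exp_le {a A R : ℝ} {z : ℂ} {N : ℕ} (ha : |a| ≤ A)
    (hz : ‖z‖ ≤ R) (hN : (1 + A) * R ≤ N) (hN0 : 0 < N) :
    ‖(cos (z / N) + I * a * sin (z / N)) ^ N - exp (I * a * z)‖
      ≤ Real.exp (A * R + (1 + A) ^ 2 * R ^ 2) * ((1 + A) ^ 2 * R ^ 2) / N := by
  set C := (1 + A) ^ 2 * R ^ 2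
  set w := z / N
  set u := cos w + I * a * sin w
  set v := exp (I * a * w)
  have hA : 0 ≤ A := (abs_nonneg a).trans ha
  have hR : 0 ≤ R := (norm_nonneg z).trans hz
  have hNpos : (0 : ℝ) < N := by exact_mod_cast hN0
  have hw : ‖w‖ ≤ R / N := by
    rw [norm_div, norm_natCast]
    gcongr
  have hAw : (1 + A) * ‖w‖ ≤ 1 :=
    calc (1 + A) * ‖w‖ ≤ (1 + A) * R / N := by rw [mul_div_assoc]; gcongr
      _ ≤ 1 := div_le_one_of_le₀ hN hNpos.le
  have haw : |a| * ‖w‖ ≤ A * ‖w‖ := by gcongr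
  have huv : ‖u - v‖ ≤ C / N ^ 2 :=
    calc ‖u - v‖ ≤ (1 + |a|) ^ 2 * ‖w‖ ^ 2 :=
          norm_cos_add_I_mul_sin_sub_exp_le a (by nlinarith [norm_nonneg w])
            (by linarith [norm_nonneg w])
      _ ≤ (1 + A) ^ 2 * (R / N) ^ 2 := by gcongr
      _ = C / N ^ 2 := by ring
  have hv : ‖v‖ ≤ Real.exp (A * R / N) :=
    (norm_exp_le_exp_norm _).trans (Real.exp_le_exp.2 (by
      rw [norm_I_mul_ofReal_mul, mul_div_assoc]
      exact haw.trans (by gcongr)))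
  have hu : ‖u‖ ≤ Real.exp ((A * R + C) / N) :=
    calc ‖u‖ ≤ ‖v‖ + ‖u - v‖ := norm_le_norm_add_norm_sub' u v
      _ ≤ Real.exp (A * R / N) + C / N := by
          gcongr
          refine huv.trans (div_le_div_of_nonneg_left (by positivity) hNpos ?_)
          nlinarith [show (1 : ℝ) ≤ N by exact_mod_cast hN0]
      _ ≤ Real.exp (A * R / N) * (1 + C / N) := by
          nlinarith [Real.one_le_exp (show 0 ≤ A * R / N by positivity),
            show 0 ≤ C / N by positivity]
      _ ≤ Real.exp (A * R / N) * Real.exp (C / N) := by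
          gcongr
          linarith [Real.add_one_le_exp (C / N)]
      _ = Real.exp ((A * R + C) / N) := by rw [← Real.exp_add, add_div]
  have hvN : v ^ N = exp (I * a * z) := by
    rw [← exp_nat_mul]
    congr 1
    simp only [w]
    field_simp [Nat.cast_ne_zero.2 hN0.ne']
  have hpow : Real.exp ((A * R + C) / N) ^ (N - 1) ≤ Real.exp (A * R + C) :=
    calc Real.exp ((A * R + C) / N) ^ (N - 1) ≤ Real.exp ((A * R + C) / N) ^ N :=
          pow_le_pow_right₀ (Real.one_le_exp (by positivity)) (N.sub_le 1)
      _ = Real.exp (A * R + C) := by rw [← Real.exp_nat_mul]; field_simp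
  calc ‖u ^ N - exp (I * a * z)‖ = ‖u ^ N - v ^ N‖ := by rw [hvN]
    _ ≤ N * Real.exp ((A * R + C) / N) ^ (N - 1) * ‖u - v‖ :=
        norm_pow_sub_pow_le hu (hv.trans (Real.exp_le_exp.2
          (div_le_div_of_nonneg_right (le_add_of_nonneg_right (by positivity)) hNpos.le))) N
    _ ≤ N * Real.exp (A * R + C) * (C / N ^ 2) := by gcongr
    _ = Real.exp (A * R + C) * C / N := by field_simp

theorem norm_exp_mul_cos_add_I_mul_sin_pow_sub_exp_le {e a A R : ℝ} {z : ℂ} {N : ℕ}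
    (he : e ∈ Set.Ico 0 1) (ha : |a| ≤ A) (hz : ‖z‖ ≤ R) (hN : (1 + A) * R ≤ N) (hN0 : 0 < N)
    (heR : e * ((1 + A) * R) ≤ 1) :
    ‖exp (I * e * z) * (cos (z * (1 - e) / N) + I * a * sin (z * (1 - e) / N)) ^ N
        - exp (I * a * z)‖
      ≤ Real.exp (A * R) * (2 * (e * ((1 + A) * R)))
        + Real.exp R * (Real.exp (A * R + (1 + A) ^ 2 * R ^ 2) * ((1 + A) ^ 2 * R ^ 2) / N) := by
  obtain ⟨he0, he1⟩ := he
  have hA : 0 ≤ A := (abs_nonneg a).trans ha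
  have hR : 0 ≤ R := (norm_nonneg z).trans hz
  have hz' : ‖z * (1 - e)‖ ≤ R := by
    rw [← ofReal_one, ← ofReal_sub, norm_mul, norm_real, Real.norm_of_nonneg (by linarith)]
    nlinarith [norm_nonneg z]
  have hshift : exp (I * e * z) * exp (I * a * (z * (1 - e)))
      = exp (I * a * z) * exp (I * e * z * (1 - a)) := by
    rw [← exp_add, ← exp_add]
    ring_nf
  have hsplit : exp (I * e * z) * (cos (z * (1 - e) / N) + I * a * sin (z * (1 - e) / N)) ^ N
        - exp (I * a * z)
      = exp (I * e * z) * ((cos (z * (1 - e) / N) + I * a * sin (z * (1 - e) / N)) ^ N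
          - exp (I * a * (z * (1 - e))))
        + exp (I * a * z) * (exp (I * e * z * (1 - a)) - 1) := by
    linear_combination hshift
  have hrot : ‖exp (I * e * z)‖ ≤ Real.exp R := by
    refine (norm_exp_le_exp_norm _).trans (Real.exp_le_exp.2 ?_)
    rw [norm_I_mul_ofReal_mul, abs_of_nonneg he0]
    nlinarith [norm_nonneg z]
  have hlimit : ‖exp (I * a * z)‖ ≤ Real.exp (A * R) := by
    refine (norm_exp_le_exp_norm _).trans (Real.exp_le_exp.2 ?_)
    rw [norm_I_mul_ofReal_mul]
    gcongr
  have hsmall : ‖I * e * z * (1 - a)‖ ≤ e * ((1 + A) * R) := by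
    rw [norm_mul, norm_I_mul_ofReal_mul, abs_of_nonneg he0]
    have := (norm_one_sub_ofReal_le a).trans (by linarith : 1 + |a| ≤ 1 + A)
    calc e * ‖z‖ * ‖1 - (a : ℂ)‖ ≤ e * R * (1 + A) := by gcongr
      _ = e * ((1 + A) * R) := by ring
  rw [hsplit]
  refine (norm_add_le _ _).trans ?_
  rw [norm_mul, norm_mul, add_comm]
  gcongr
  · exact (norm_exp_sub_one_le (hsmall.trans heR)).trans (by gcongr)
  · exact norm_cos_add_I_mul_sin_pow_sub_exp_le ha hz' hN hN0

end Complex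

theorem stmt3 (ε : ℕ → ℝ) (hε : ∀ N, ε N ∈ Set.Ico (0 : ℝ) 1)
    (hε0 : Filter.Tendsto ε Filter.atTop (nhds 0))
    (K : Set ℝ) (hK : IsCompact K) (Kz : Set ℂ) (hKz : IsCompact Kz) :
    TendstoUniformlyOn
      (fun (N : ℕ) (p : ℝ × ℂ) =>
        Complex.exp (Complex.I * (ε N : ℂ) * p.2) *
          (Complex.cos (p.2 * (1 - (ε N : ℂ)) / (N : ℂ)) +
              Complex.I * (p.1 : ℂ) * Complex.sin (p.2 * (1 - (ε N : ℂ)) / (N : ℂ))) ^ N)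
      (fun p => Complex.exp (Complex.I * (p.1 : ℂ) * p.2)) Filter.atTop (K ×ˢ Kz) := by
  obtain ⟨A, -, hA⟩ := hK.isBounded.exists_pos_norm_le
  obtain ⟨R, -, hR⟩ := hKz.isBounded.exists_pos_norm_le
  set C := (1 + A) ^ 2 * R ^ 2
  have hεR : Tendsto (fun N => ε N * ((1 + A) * R)) atTop (𝓝 0) := by
    simpa using hε0.mul_const ((1 + A) * R)
  refine tendstoUniformlyOn_of_dist_le
    (b := fun N : ℕ => Real.exp (A * R) * (2 * (ε N * ((1 + A) * R)))
      + Real.exp R * (Real.exp (A * R + C) * C / N)) ?_ ?_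
  · simpa using (hεR.const_mul 2).const_mul (Real.exp (A * R)) |>.add
      ((tendsto_const_div_atTop_nhds_zero_nat (Real.exp (A * R + C) * C)).const_mul (Real.exp R))
  filter_upwards [eventually_gt_atTop 0,
    tendsto_natCast_atTop_atTop.eventually_ge_atTop ((1 + A) * R),
    hεR.eventually (ge_mem_nhds one_pos)] with N hN0 hN heR
  rintro ⟨a, z⟩ ⟨ha, hz⟩
  rw [dist_comm, dist_eq]
  exact norm_exp_mul_cos_add_I_mul_sin_pow_sub_exp_le (hε N) (by simpa using hA a ha) (hR z hz)
    hN hN0 heR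
end

section
/- Let N ∈ ℕ, let h_0 > h_1 > ... > h_N be distinct real numbers, and for a ∈ ℝ define T_N^{Lag}[a](x) = Σ_{ν=0}^N (Π_{ν'≠ν} (a − h_{ν'})/(h_ν − h_{ν'}))·exp(i·h_ν·x). If all |h_ν| ≤ 1 and |a| ≤ M with M ≥ 1, then for all x ∈ ℝ, |exp(iax) − T_N^{Lag}[a](x)| ≤ ((|a|+1)·|x|)^{N+1}/(N+1)!. -/
/-!
With `f y = exp (i y x)` and nodes `h_0, …, h_N`, the interpolation error at a point `a` off the
nodes is `ω(a) · f[h_0, …, h_N, a]`, where `ω(a) = ∏ (a - h_ν)`, so `|ω(a)| ≤ (|a| + 1)^(N+1)`.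
The divided difference of `f` over `k + 1` distinct real nodes is at most `|x|^k / k!`, by
induction on the nodes: `f[y_0, …, y_k, c] = g[y_0, …, y_k]` for the slope
`g y = (f y - f c) / (y - c) = ∫₀¹ i x e^{i c (1-t) x} e^{i y (t x)} dt`, an average of exponentials
of the same kind with frequency `t x`; the induction hypothesis bounds the integrand by
`|x| (t |x|)^(k-1) / (k-1)!`, whose integral over `[0, 1]` is `|x|^k / k!`.
-/

open Finset Polynomial

namespace Lagrange

variable {F ι E : Type*} [Field F] [DecidableEq ι] [AddCommGroup E] [Module F E]
  {s : Finset ι} {v : ι → F} {i j : ι}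

theorem sum_nodalWeight_eq_zero (hvs : Set.InjOn v s) (hs : 1 < #s) :
    ∑ i ∈ s, nodalWeight s v i = 0 := by
  have h := coeff_eq_sum hvs (P := 1) (by rw [degree_one]; exact_mod_cast zero_lt_one.trans hs)
  rw [coeff_one, if_neg (by omega)] at h
  simpa [nodalWeight, prod_inv_distrib] using h.symm

theorem nodalWeight_insert (hj : j ∉ s) (hi : i ∈ s) :
    nodalWeight (insert j s) v i = nodalWeight s v i * (v i - v j)⁻¹ := by
  rw [nodalWeight, erase_insert_of_ne (ne_of_mem_of_not_mem hi hj).symm, prod_insert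
    (fun h ↦ hj (mem_of_mem_erase h)), mul_comm, nodalWeight]

theorem nodalWeight_insert_self (hj : j ∉ s) :
    nodalWeight (insert j s) v j = (eval (v j) (nodal s v))⁻¹ := by
  rw [nodalWeight_eq_eval_nodal_erase_inv, erase_insert hj]

theorem eval_basis (x : F) :
    eval x (Lagrange.basis s v i) = ∏ j ∈ s.erase i, (x - v j) / (v i - v j) := by
  simp only [Lagrange.basis, basisDivisor, eval_prod, eval_mul, eval_C, eval_sub, eval_X]
  exact prod_congr rfl fun _ _ ↦ by rw [div_eq_inv_mul]

theorem sum_eval_basis_smul_of_mem (hvs : Set.InjOn v s) (hj : j ∈ s) (f : F → E) :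
    ∑ i ∈ s, eval (v j) (Lagrange.basis s v i) • f (v i) = f (v j) := by
  rw [sum_eq_single_of_mem j hj fun i _ hij ↦ by rw [eval_basis_of_ne hij hj, zero_smul],
    eval_basis_self hvs hj, one_smul]

/-- The divided difference `f[v i | i ∈ s] = ∑ i ∈ s, f (v i) / ∏ j ∈ s.erase i, (v i - v j)`. -/
def dividedDifference (s : Finset ι) (v : ι → F) (f : F → E) : E :=
  ∑ i ∈ s, nodalWeight s v i • f (v i)

theorem dividedDifference_singleton (f : F → E) : dividedDifference {i} v f = f (v i) := by
  simp [dividedDifference, nodalWeight]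

theorem dividedDifference_congr {f g : F → E} (hfg : ∀ i ∈ s, f (v i) = g (v i)) :
    dividedDifference s v f = dividedDifference s v g :=
  sum_congr rfl fun i hi ↦ by rw [hfg i hi]

theorem dividedDifference_const_smul {R : Type*} [Monoid R] [DistribMulAction R E]
    [SMulCommClass F R E] (c : R) (f : F → E) :
    dividedDifference s v (fun y ↦ c • f y) = c • dividedDifference s v f := by
  simp only [dividedDifference, smul_sum]
  exact sum_congr rfl fun i _ ↦ smul_comm _ _ _

theorem dividedDifference_insert (hvs : Set.InjOn v ↑(insert j s)) (hj : j ∉ s)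
    (hs : s.Nonempty) (f : F → E) :
    dividedDifference (insert j s) v f =
      dividedDifference s v fun y ↦ (y - v j)⁻¹ • (f y - f (v j)) := by
  have hzero := sum_nodalWeight_eq_zero hvs (by rw [card_insert_of_notMem hj]; simp [hs.card_pos])
  rw [sum_insert hj, sum_congr rfl fun i hi ↦ nodalWeight_insert hj hi] at hzero
  rw [dividedDifference, sum_insert hj, sum_congr rfl fun i hi ↦ by rw [nodalWeight_insert hj hi],
    eq_neg_of_add_eq_zero_left hzero, dividedDifference]
  simp only [smul_sub, smul_smul, sum_sub_distrib, ← sum_smul, neg_smul]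
  abel

theorem sub_sum_eval_basis_smul (hvs : Set.InjOn v ↑(insert j s)) (hj : j ∉ s) (f : F → E) :
    f (v j) - ∑ i ∈ s, eval (v j) (Lagrange.basis s v i) • f (v i) =
      eval (v j) (nodal s v) • dividedDifference (insert j s) v f := by
  have hne : ∀ i ∈ s, v j ≠ v i := fun i hi h ↦
    hj (hvs (mem_insert_self j s) (mem_insert_of_mem hi) h ▸ hi)
  have hω : eval (v j) (nodal s v) ≠ 0 := eval_nodal_not_at_node hne
  rw [dividedDifference, sum_insert hj, nodalWeight_insert_self hj, smul_add, smul_smul,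
    mul_inv_cancel₀ hω, one_smul, smul_sum, sub_eq_add_neg, ← sum_neg_distrib]
  congr 1
  refine sum_congr rfl fun i hi ↦ ?_
  rw [eval_basis_not_at_node hi (hne i hi), nodalWeight_insert hj hi, smul_smul, ← neg_smul]
  congr 1
  rw [← neg_sub (v i), inv_neg]
  ring

end Lagrange

open Lagrange Complex

theorem dividedDifference_intervalIntegral {ι E : Type*} [DecidableEq ι] [NormedAddCommGroup E]
    [NormedSpace ℝ E] {s : Finset ι} {v : ι → ℝ} {a b : ℝ} {g : ℝ → ℝ → E}
    (hg : ∀ i ∈ s, IntervalIntegrable (fun t ↦ g t (v i)) MeasureTheory.volume a b) :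
    dividedDifference s v (fun y ↦ ∫ t in a..b, g t y) =
      ∫ t in a..b, dividedDifference s v (g t) := by
  simp only [dividedDifference, ← intervalIntegral.integral_smul]
  exact (intervalIntegral.integral_finsetSum fun i hi ↦ (hg i hi).smul (nodalWeight s v i)).symm

theorem slope_cexp_eq_integral {c y : ℝ} (hyc : y ≠ c) (x : ℝ) :
    (y - c)⁻¹ • (cexp (I * y * x) - cexp (I * c * x)) =
      ∫ t in (0 : ℝ)..1, I * x * cexp (I * c * ((1 - t) * x : ℝ)) * cexp (I * y * (t * x : ℝ)) := by
  have hderiv (t : ℝ) : HasDerivAt (fun t : ℝ ↦ cexp (I * (c + t * (y - c)) * x))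
      (cexp (I * (c + t * (y - c)) * x) * (I * (y - c) * x)) t := by
    have := ((((hasDerivAt_id (t : ℂ)).mul_const ((y - c : ℝ) : ℂ)).const_add (c : ℂ)).const_mul I
      |>.mul_const (x : ℂ)).cexp.comp_ofReal
    simpa using this
  have hftc := intervalIntegral.integral_eq_sub_of_hasDerivAt (fun t _ ↦ hderiv t)
    ((by fun_prop : Continuous fun t : ℝ ↦ cexp (I * (c + t * (y - c)) * x) * (I * (y - c) * x))
      |>.intervalIntegrable 0 1)
  have hyc' : (y - c : ℂ) ≠ 0 := sub_ne_zero.mpr (ofReal_injective.ne hyc)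
  simp only [ofReal_zero, ofReal_one, zero_mul, add_zero, one_mul, add_sub_cancel] at hftc
  rw [real_smul, ← hftc, ← intervalIntegral.integral_const_mul]
  refine intervalIntegral.integral_congr fun t _ ↦ ?_
  push_cast
  rw [mul_assoc (I * (x : ℂ)), ← exp_add]
  field_simp
  ring_nf

theorem norm_cexp_I_mul_ofReal_mul_ofReal (y x : ℝ) : ‖cexp (I * y * x)‖ = 1 := by
  rw [mul_assoc, ← ofReal_mul, norm_exp_I_mul_ofReal]

theorem norm_dividedDifference_cexp_le {ι : Type*} [DecidableEq ι] {s : Finset ι} {v : ι → ℝ}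
    (hs : s.Nonempty) (hvs : Set.InjOn v s) (x : ℝ) :
    ‖dividedDifference s v (fun y : ℝ ↦ cexp (I * y * x))‖ ≤
      |x| ^ (#s - 1) / (#s - 1).factorial := by
  induction hs using Finset.Nonempty.cons_induction generalizing x with
  | singleton j =>
    simp [dividedDifference_singleton, norm_cexp_I_mul_ofReal_mul_ofReal]
  | cons j s hj hs ih =>
    rw [cons_eq_insert] at hvs ⊢
    obtain ⟨k, hk⟩ : ∃ k, #s = k + 1 := Nat.exists_eq_add_one.mpr hs.card_pos
    rw [card_insert_of_notMem hj, hk, Nat.add_sub_cancel]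
    have hne (i) (hi : i ∈ s) : v i ≠ v j := fun h ↦
      ne_of_mem_of_not_mem hi hj (hvs (mem_insert_of_mem hi) (mem_insert_self j s) h)
    rw [dividedDifference_insert hvs hj hs,
      dividedDifference_congr (g := fun y : ℝ ↦ ∫ t in (0 : ℝ)..1,
        I * x * cexp (I * v j * ((1 - t) * x : ℝ)) * cexp (I * y * (t * x : ℝ)))
        fun i hi ↦ slope_cexp_eq_integral (hne i hi) x,
      dividedDifference_intervalIntegral fun i _ ↦
        (by fun_prop : Continuous _).intervalIntegrable 0 1]
    calc _ ≤ ∫ t in (0 : ℝ)..1, |x| ^ (k + 1) / k.factorial * t ^ k := by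
          refine intervalIntegral.norm_integral_le_of_norm_le zero_le_one
            (MeasureTheory.ae_of_all _ fun t ht ↦ ?_)
            ((continuous_const.mul (continuous_pow k)).intervalIntegrable 0 1)
          simp_rw [← smul_eq_mul (I * x * _), dividedDifference_const_smul, norm_smul]
          have := ih (hvs.mono (by simp)) (t * x)
          rw [hk, Nat.add_sub_cancel, abs_mul, abs_of_pos ht.1, mul_pow] at this
          rw [norm_mul, norm_mul, norm_I, one_mul, norm_real, Real.norm_eq_abs,
            norm_cexp_I_mul_ofReal_mul_ofReal, mul_one]
          calc _ ≤ |x| * (t ^ k * |x| ^ k / k.factorial) := by gcongr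
            _ = _ := by ring
      _ = |x| ^ (k + 1) / (k + 1).factorial := by
          rw [intervalIntegral.integral_const_mul, integral_pow, Nat.factorial_succ]
          push_cast
          field_simp
          ring

theorem norm_cexp_sub_sum_eval_basis_smul_le {ι : Type*} [DecidableEq ι] {s : Finset ι}
    {v : ι → ℝ} {j : ι} (hvs : Set.InjOn v ↑(insert j s)) (hj : j ∉ s) (x : ℝ) :
    ‖cexp (I * v j * x) - ∑ i ∈ s, eval (v j) (Lagrange.basis s v i) • cexp (I * v i * x)‖ ≤
      |eval (v j) (nodal s v)| * (|x| ^ #s / (#s).factorial) := by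
  rw [sub_sum_eval_basis_smul hvs hj fun y : ℝ ↦ cexp (I * y * x), norm_smul, Real.norm_eq_abs]
  have := norm_dividedDifference_cexp_le (insert_nonempty j s) hvs x
  rw [card_insert_of_notMem hj, Nat.add_sub_cancel] at this
  gcongr

theorem abs_eval_nodal_le {ι : Type*} {s : Finset ι} {v : ι → ℝ} {r : ℝ}
    (hv : ∀ i ∈ s, |v i| ≤ r) (x : ℝ) : |eval x (nodal s v)| ≤ (|x| + r) ^ #s := by
  rw [eval_nodal, abs_prod, ← prod_const]
  exact prod_le_prod (fun _ _ ↦ abs_nonneg _) fun i hi ↦ (abs_sub _ _).trans (by linarith [hv i hi])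

theorem stmt4_general (N : ℕ) (h : ℕ → ℝ)
    (hdec : ∀ i j, i < j → j ≤ N → h j < h i)
    (hbd : ∀ ν ≤ N, |h ν| ≤ 1)
    (a : ℝ) (x : ℝ) :
    ‖Complex.exp (Complex.I * (a : ℂ) * (x : ℂ)) -
        ∑ ν ∈ Finset.range (N + 1),
          (∏ ν' ∈ (Finset.range (N + 1)).erase ν, (((a - h ν') / (h ν - h ν') : ℝ) : ℂ)) *
            Complex.exp (Complex.I * (h ν : ℂ) * (x : ℂ))‖ ≤
      ((|a| + 1) * |x|) ^ (N + 1) / (N + 1).factorial := by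
  set s := range (N + 1)
  -- `a` is adjoined as the node of index `N + 1`
  set v := Function.update h (N + 1) a
  have hva : v (N + 1) = a := Function.update_self ..
  have hv : ∀ ν ∈ s, v ν = h ν := fun ν hν ↦ Function.update_of_ne (mem_range.mp hν).ne ..
  have hle : ∀ ν ∈ s, ν ≤ N := fun ν hν ↦ Nat.lt_succ_iff.mp (mem_range.mp hν)
  have hinj : Set.InjOn v s := by
    have hanti : StrictAntiOn h (Set.Iic N) := fun i _ j hj hij ↦ hdec i j hij hj
    exact (hanti.injOn.mono hle).congr fun ν hν ↦ (hv ν hν).symm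
  have hsum : ∑ ν ∈ s, (∏ ν' ∈ s.erase ν, (((a - h ν') / (h ν - h ν') : ℝ) : ℂ)) *
      cexp (I * h ν * x) = ∑ ν ∈ s, eval (v (N + 1)) (Lagrange.basis s v ν) • cexp (I * v ν * x) :=
    sum_congr rfl fun ν hν ↦ by
      rw [eval_basis, real_smul, ofReal_prod, hv ν hν, hva]
      exact congrArg₂ _ (prod_congr rfl fun ν' hν' ↦ by rw [hv ν' (mem_of_mem_erase hν')]) rfl
  rw [hsum, ← hva]
  by_cases hnode : ∃ k ∈ s, v k = v (N + 1)
  · obtain ⟨k, hk, hkv⟩ := hnode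
    rw [← hkv, sum_eval_basis_smul_of_mem hinj hk fun y : ℝ ↦ cexp (I * y * x), sub_self, norm_zero]
    positivity
  · have hinj' : Set.InjOn v ↑(insert (N + 1) s) := by
      rw [coe_insert, Set.injOn_insert (by simp [s])]
      exact ⟨hinj, hnode⟩
    refine (norm_cexp_sub_sum_eval_basis_smul_le hinj' (by simp [s]) x).trans ?_
    have hnodal := abs_eval_nodal_le (fun ν hν ↦ (hv ν hν).symm ▸ hbd ν (hle ν hν)) a
    rw [card_range, mul_pow, mul_div_assoc]
    gcongr
    rwa [hva, ← card_range (N + 1)]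

theorem stmt4 (N : ℕ) (h : ℕ → ℝ)
    (hdec : ∀ i j, i < j → j ≤ N → h j < h i)
    (hbd : ∀ ν ≤ N, |h ν| ≤ 1)
    (a M : ℝ) (hM : 1 ≤ M) (ha : |a| ≤ M) (x : ℝ) :
    ‖Complex.exp (Complex.I * (a : ℂ) * (x : ℂ)) -
        ∑ ν ∈ Finset.range (N + 1),
          (∏ ν' ∈ (Finset.range (N + 1)).erase ν, (((a - h ν') / (h ν - h ν') : ℝ) : ℂ)) *
            Complex.exp (Complex.I * (h ν : ℂ) * (x : ℂ))‖ ≤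
      ((|a| + 1) * |x|) ^ (N + 1) / (N + 1).factorial :=
  stmt4_general N h hdec hbd a x
end

section
/- Let ψ : A → ℂ be a function on an interval A ⊆ ℝ, let θ : ℝ → ℂ be continuous with support in [0,ε], and define (ψ∗θ)(a) = ∫_0^ε θ(α)·ψ(a−α) dα for a with a−[0,ε] ⊆ A. If for each fixed α ∈ [0,ε] the sequence of functions S_N(a,a',α) = Σ_{ν=0}^N binom(N,ν)·((1+a)/2)^{N−ν}·((1−a)/2)^ν·ψ(a'−α + h_{N,ν}) converges to ψ(a+a'−α) uniformly in (a,a') on a compact set K and uniformly in α ∈ [0,ε], then Σ_{ν=0}^N binom(N,ν)·((1+a)/2)^{N−ν}·((1−a)/2)^ν·(ψ∗θ)(a' + h_{N,ν}) converges to (ψ∗θ)(a+a') uniformly on K. -/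
theorem stmt14 (ψ θ : ℝ → ℂ) (hψ : Continuous ψ) (hθ : Continuous θ)
    (ε : ℝ) (hε : 0 < ε) (hsupp : Function.support θ ⊆ Set.Icc 0 ε)
    (εseq : ℕ → ℝ) (hεs : ∀ N, εseq N ∈ Set.Ico (0 : ℝ) 1)
    (hεs0 : Filter.Tendsto εseq Filter.atTop (nhds 0))
    (h : ℕ → ℕ → ℝ)
    (hdef : ∀ N ν, h N ν = 1 - 2 * ((ν + εseq N * ((N : ℝ) - ν)) / N))
    (K : Set (ℝ × ℝ)) (hK : IsCompact K)
    (hconv : TendstoUniformlyOn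
      (fun (N : ℕ) (p : (ℝ × ℝ) × ℝ) =>
        ∑ ν ∈ Finset.range (N + 1),
          (N.choose ν : ℂ) * ((1 + (p.1.1 : ℂ)) / 2) ^ (N - ν) *
            ((1 - (p.1.1 : ℂ)) / 2) ^ ν * ψ (p.1.2 - p.2 + h N ν))
      (fun p => ψ (p.1.1 + p.1.2 - p.2)) Filter.atTop (K ×ˢ Set.Icc 0 ε)) :
    TendstoUniformlyOn
      (fun (N : ℕ) (p : ℝ × ℝ) =>
        ∑ ν ∈ Finset.range (N + 1),
          (N.choose ν : ℂ) * ((1 + (p.1 : ℂ)) / 2) ^ (N - ν) *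
            ((1 - (p.1 : ℂ)) / 2) ^ ν *
              ∫ α in (0 : ℝ)..ε, θ α * ψ (p.2 + h N ν - α))
      (fun p => ∫ α in (0 : ℝ)..ε, θ α * ψ (p.1 + p.2 - α)) Filter.atTop K := by
  rw [Metric.tendstoUniformlyOn_iff] at hconv ⊢
  intro u hu
  set C : ℝ := ∫ α in (0 : ℝ)..ε, ‖θ α‖ with hCdef
  have hC0 : 0 ≤ C := intervalIntegral.integral_nonneg hε.le fun _ _ => norm_nonneg _
  have hδ : 0 < u / (C + 1) := div_pos hu (by linarith)
  filter_upwards [hconv (u / (C + 1)) hδ] with N hN p hp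
  set δ := u / (C + 1)
  -- continuity of the partial sum in α
  have hScont : Continuous (fun α : ℝ => ∑ ν ∈ Finset.range (N + 1),
      (N.choose ν : ℂ) * ((1 + (p.1 : ℂ)) / 2) ^ (N - ν) *
        ((1 - (p.1 : ℂ)) / 2) ^ ν * ψ (p.2 - α + h N ν)) := by
    apply continuous_finset_sum
    intro ν _
    exact continuous_const.mul (hψ.comp (((continuous_const.sub continuous_id).add continuous_const)))
  -- swap sum and integral
  have key : (∑ ν ∈ Finset.range (N + 1),
      (N.choose ν : ℂ) * ((1 + (p.1 : ℂ)) / 2) ^ (N - ν) *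
        ((1 - (p.1 : ℂ)) / 2) ^ ν * ∫ α in (0 : ℝ)..ε, θ α * ψ (p.2 + h N ν - α))
      = ∫ α in (0 : ℝ)..ε, θ α * ∑ ν ∈ Finset.range (N + 1),
          (N.choose ν : ℂ) * ((1 + (p.1 : ℂ)) / 2) ^ (N - ν) *
            ((1 - (p.1 : ℂ)) / 2) ^ ν * ψ (p.2 - α + h N ν) := by
    have swap : (∫ α in (0 : ℝ)..ε, ∑ ν ∈ Finset.range (N + 1),
        (N.choose ν : ℂ) * ((1 + (p.1 : ℂ)) / 2) ^ (N - ν) *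
          ((1 - (p.1 : ℂ)) / 2) ^ ν * (θ α * ψ (p.2 - α + h N ν)))
        = ∑ ν ∈ Finset.range (N + 1), ∫ α in (0 : ℝ)..ε,
            (N.choose ν : ℂ) * ((1 + (p.1 : ℂ)) / 2) ^ (N - ν) *
              ((1 - (p.1 : ℂ)) / 2) ^ ν * (θ α * ψ (p.2 - α + h N ν)) := by
      apply intervalIntegral.integral_finset_sum
      intro ν _
      apply Continuous.intervalIntegrable
      exact continuous_const.mul (hθ.mul (hψ.comp ((continuous_const.sub continuous_id).add continuous_const)))
    calc (∑ ν ∈ Finset.range (N + 1),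
        (N.choose ν : ℂ) * ((1 + (p.1 : ℂ)) / 2) ^ (N - ν) *
          ((1 - (p.1 : ℂ)) / 2) ^ ν * ∫ α in (0 : ℝ)..ε, θ α * ψ (p.2 + h N ν - α))
        = ∑ ν ∈ Finset.range (N + 1), ∫ α in (0 : ℝ)..ε,
            (N.choose ν : ℂ) * ((1 + (p.1 : ℂ)) / 2) ^ (N - ν) *
              ((1 - (p.1 : ℂ)) / 2) ^ ν * (θ α * ψ (p.2 - α + h N ν)) := by
          refine Finset.sum_congr rfl fun ν _ => ?_
          rw [intervalIntegral.integral_const_mul]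
          congr 1
          refine intervalIntegral.integral_congr fun α _ => ?_
          rw [add_sub_right_comm]
      _ = ∫ α in (0 : ℝ)..ε, θ α * ∑ ν ∈ Finset.range (N + 1),
            (N.choose ν : ℂ) * ((1 + (p.1 : ℂ)) / 2) ^ (N - ν) *
              ((1 - (p.1 : ℂ)) / 2) ^ ν * ψ (p.2 - α + h N ν) := by
          rw [← swap]
          refine intervalIntegral.integral_congr fun α _ => ?_
          rw [Finset.mul_sum]
          exact Finset.sum_congr rfl fun ν _ => by ring
  rw [dist_eq_norm, key]
  have hint1 : IntervalIntegrable (fun α : ℝ => θ α * ψ (p.1 + p.2 - α))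
      MeasureTheory.volume 0 ε :=
    Continuous.intervalIntegrable
      (hθ.mul (hψ.comp (continuous_const.sub continuous_id))) _ _
  have hint2 : IntervalIntegrable (fun α : ℝ => θ α * ∑ ν ∈ Finset.range (N + 1),
      (N.choose ν : ℂ) * ((1 + (p.1 : ℂ)) / 2) ^ (N - ν) *
        ((1 - (p.1 : ℂ)) / 2) ^ ν * ψ (p.2 - α + h N ν)) MeasureTheory.volume 0 ε :=
    (hθ.mul hScont).intervalIntegrable _ _
  rw [← intervalIntegral.integral_sub hint1 hint2]
  have hbound : (∫ α in (0 : ℝ)..ε,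
      ‖θ α * ψ (p.1 + p.2 - α) - θ α * ∑ ν ∈ Finset.range (N + 1),
        (N.choose ν : ℂ) * ((1 + (p.1 : ℂ)) / 2) ^ (N - ν) *
          ((1 - (p.1 : ℂ)) / 2) ^ ν * ψ (p.2 - α + h N ν)‖)
      ≤ ∫ α in (0 : ℝ)..ε, ‖θ α‖ * δ := by
    apply intervalIntegral.integral_mono_on hε.le
    · apply Continuous.intervalIntegrable
      exact ((hθ.mul (hψ.comp (continuous_const.sub continuous_id))).sub (hθ.mul hScont)).norm
    · exact (hθ.norm.mul continuous_const).intervalIntegrable _ _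
    · intro α hα
      rw [← mul_sub, norm_mul]
      refine mul_le_mul_of_nonneg_left ?_ (norm_nonneg _)
      have := hN (p, α) (Set.mk_mem_prod hp hα)
      rw [dist_eq_norm] at this
      exact this.le
  have hCδ : (∫ α in (0 : ℝ)..ε, ‖θ α‖ * δ) = C * δ := by
    rw [intervalIntegral.integral_mul_const]
  calc ‖∫ α in (0 : ℝ)..ε, (θ α * ψ (p.1 + p.2 - α) - θ α * ∑ ν ∈ Finset.range (N + 1),
        (N.choose ν : ℂ) * ((1 + (p.1 : ℂ)) / 2) ^ (N - ν) *
          ((1 - (p.1 : ℂ)) / 2) ^ ν * ψ (p.2 - α + h N ν))‖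
      ≤ ∫ α in (0 : ℝ)..ε,
        ‖θ α * ψ (p.1 + p.2 - α) - θ α * ∑ ν ∈ Finset.range (N + 1),
          (N.choose ν : ℂ) * ((1 + (p.1 : ℂ)) / 2) ^ (N - ν) *
            ((1 - (p.1 : ℂ)) / 2) ^ ν * ψ (p.2 - α + h N ν)‖ :=
        intervalIntegral.norm_integral_le_integral_norm hε.le
    _ ≤ C * δ := hCδ ▸ hbound
    _ < u := by
        have : C * δ = C * u / (C + 1) := by rw [mul_div_assoc]
        rw [this, div_lt_iff₀ (by linarith)]
        nlinarith
end

section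
/- Let Ψ : B → ℂ be a function on an interval B ⊆ ℝ, and define Φ(b) = b·Ψ(b). Then for every N ≥ 2, every b ∈ ℝ, b' ∈ ℝ with all arguments in B, and every ε ∈ [0,1): Σ_{ν=0}^N binom(N,ν)·b^ν(1−b)^{N−ν}·Φ(b' + ν(1−ε)/N) = (1−ε)·b·Σ_{ν=0}^{N−1} binom(N−1,ν)·b^ν(1−b)^{N−1−ν}·Ψ(b' + (1−ε)/N + ν·(1−ε')/(N−1)) + b'·Σ_{ν=0}^N binom(N,ν)·b^ν(1−b)^{N−ν}·Ψ(b' + ν(1−ε)/N), where 1−ε' = ((N−1)/N)·(1−ε). -/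
theorem stmt15 (B : Set ℝ) (Ψ Φ : ℝ → ℂ) (hΦ : ∀ x : ℝ, Φ x = (x : ℂ) * Ψ x)
    (N : ℕ) (hN : 2 ≤ N) (b b' : ℝ) (ε ε' : ℝ) (hε : ε ∈ Set.Ico (0 : ℝ) 1)
    (hε' : 1 - ε' = (((N : ℝ) - 1) / N) * (1 - ε))
    (hmem : ∀ ν ≤ N, b' + ν * (1 - ε) / N ∈ B) :
    ∑ ν ∈ Finset.range (N + 1),
        (N.choose ν : ℂ) * (b : ℂ) ^ ν * (1 - (b : ℂ)) ^ (N - ν) * Φ (b' + ν * (1 - ε) / N) =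
    (1 - (ε : ℂ)) * (b : ℂ) *
        ∑ ν ∈ Finset.range N,
          ((N - 1).choose ν : ℂ) * (b : ℂ) ^ ν * (1 - (b : ℂ)) ^ (N - 1 - ν) *
            Ψ (b' + (1 - ε) / N + ν * (1 - ε') / ((N : ℝ) - 1)) +
      (b' : ℂ) *
        ∑ ν ∈ Finset.range (N + 1),
          (N.choose ν : ℂ) * (b : ℂ) ^ ν * (1 - (b : ℂ)) ^ (N - ν) *
            Ψ (b' + ν * (1 - ε) / N) := by
  obtain ⟨n, rfl⟩ : ∃ n, N = n + 2 := ⟨N - 2, by omega⟩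
  have hn1 : ((n : ℝ) + 1) ≠ 0 := by positivity
  have hn2 : ((n : ℝ) + 2) ≠ 0 := by positivity
  have harg : ∀ μ : ℕ, b' + (1 - ε) / (↑(n + 2)) + ↑μ * (1 - ε') / ((↑(n + 2) : ℝ) - 1)
      = b' + (↑(μ + 1)) * (1 - ε) / (↑(n + 2)) := by
    intro μ
    have h2 : (1 - ε') = (((n : ℝ) + 1) / ((n : ℝ) + 2)) * (1 - ε) := by
      rw [hε']; push_cast; ring_nf
    have h3 : (↑(n + 2) : ℝ) - 1 = (n : ℝ) + 1 := by push_cast; ring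
    rw [h3, h2]
    push_cast
    field_simp
    ring
  have hcast : ∀ ν : ℕ, ((b' + ν * (1 - ε) / (↑(n + 2) : ℝ) : ℝ) : ℂ)
      = (b' : ℂ) + ν * (1 - (ε : ℂ)) / ((n : ℂ) + 2) := by
    intro ν; push_cast; ring
  simp only [hΦ, harg, hcast]
  have split : ∀ ν : ℕ,
      ((n + 2).choose ν : ℂ) * (b : ℂ) ^ ν * (1 - (b : ℂ)) ^ (n + 2 - ν) *
        (((b' : ℂ) + ν * (1 - (ε : ℂ)) / ((n : ℂ) + 2)) * Ψ (b' + ν * (1 - ε) / ↑(n + 2)))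
      = (ν * (1 - (ε : ℂ)) / ((n : ℂ) + 2)) * (((n + 2).choose ν : ℂ) * (b : ℂ) ^ ν *
          (1 - (b : ℂ)) ^ (n + 2 - ν) * Ψ (b' + ν * (1 - ε) / ↑(n + 2)))
        + (b' : ℂ) * (((n + 2).choose ν : ℂ) * (b : ℂ) ^ ν *
          (1 - (b : ℂ)) ^ (n + 2 - ν) * Ψ (b' + ν * (1 - ε) / ↑(n + 2))) := by
    intro ν; ring
  simp only [split]
  rw [Finset.sum_add_distrib, Finset.mul_sum, Finset.mul_sum]
  congr 1
  rw [Finset.sum_range_succ']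
  simp only [Nat.cast_zero, zero_mul, zero_div, zero_mul, add_zero]
  refine Finset.sum_congr rfl ?_
  intro μ hμ
  have hcN : (μ + 1) * ((n + 2).choose (μ + 1)) = (n + 2) * ((n + 1).choose μ) := by
    exact (mul_comm _ _).trans (Nat.add_one_mul_choose_eq (n + 1) μ).symm
  have hc : ((μ : ℂ) + 1) * ((n + 2).choose (μ + 1) : ℂ) = ((n : ℂ) + 2) * ((n + 1).choose μ : ℂ) := by
    exact_mod_cast hcN
  have hn2' : ((n : ℂ) + 2) ≠ 0 := by
    intro h
    have := congrArg Complex.re h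
    simp at this
    exact hn2 (by push_cast; linarith)
  have hexp : n + 2 - (μ + 1) = n + 2 - 1 - μ := by omega
  have hch : ((n + 2 - 1).choose μ : ℂ) = ((n + 1).choose μ : ℂ) := by norm_num
  have h : ((μ : ℂ) + 1) * (1 - (ε : ℂ)) / ((n : ℂ) + 2) * ((n + 2).choose (μ + 1) : ℂ)
      = (1 - (ε : ℂ)) * ((n + 1).choose μ : ℂ) := by
    field_simp
    linear_combination (1 - (ε : ℂ)) * hc
  have hexp2 : n + 2 - 1 - μ = n + 1 - μ := by omega
  rw [hexp, hexp2, hch]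
  push_cast
  linear_combination ((b : ℂ) ^ (μ + 1) * (1 - (b : ℂ)) ^ (n + 1 - μ) *
    Ψ (b' + ((μ : ℝ) + 1) * (1 - ε) / ((n : ℝ) + 2))) * h
end

section
/- Let Ψ : B → ℂ be continuous on an interval B, and define Φ(b) = ∫_{b₀'}^{b} Ψ. Then for every N ≥ 2, b ∈ ℝ, ε ∈ [0,1), with all relevant points in B: d/db [Σ_{ν=0}^N binom(N,ν)·b^ν(1−b)^{N−ν}·Φ(b₀' + ν(1−ε)/N)] = (1−ε)·∫_0^1 Σ_{ν=0}^{N−1} binom(N−1,ν)·b^ν(1−b)^{N−1−ν}·Ψ(b₀' + (1−ε)ξ/N + ν·(1−ε')/(N−1)) dξ, where 1−ε' = ((N−1)/N)(1−ε). -/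
/-!
The derivative of a Bernstein sum `∑ B_{N,ν} c ν` is `N ∑ B_{N-1,ν} (c (ν + 1) - c ν)`. Here
`c ν = Φ (b₀' + ν h)` with `Φ` the primitive of `Ψ` and `h = (1 - ε) / N`, so each forward
difference is `h ∫₀¹ Ψ (b₀' + ν h + h ξ) dξ`; the relation between `ε` and `ε'` says exactly that
`(1 - ε') / (N - 1) = h`, and `N h = 1 - ε`.
-/

open Finset Polynomial

namespace bernsteinPolynomial

theorem derivative_sum_mul_C {R : Type*} [CommRing R] (n : ℕ) (c : ℕ → R) :
    derivative (∑ ν ∈ range (n + 1), bernsteinPolynomial R n ν * C (c ν)) =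
      n * ∑ ν ∈ range n, bernsteinPolynomial R (n - 1) ν * C (c (ν + 1) - c ν) := by
  rcases n with _ | n
  · simp [bernsteinPolynomial]
  have hshift : ∑ ν ∈ range (n + 1), bernsteinPolynomial R n (ν + 1) * C (c (ν + 1)) +
      bernsteinPolynomial R n 0 * C (c 0) =
      ∑ ν ∈ range (n + 1), bernsteinPolynomial R n ν * C (c ν) := by
    rw [← sum_range_succ' (fun ν => bernsteinPolynomial R n ν * C (c ν)), sum_range_succ,
      eq_zero_of_lt R n.lt_succ_self, zero_mul, add_zero]
  simp only [derivative_sum, derivative_mul, derivative_C, mul_zero, add_zero]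
  rw [sum_range_succ', derivative_zero]
  simp only [derivative_succ, Nat.add_sub_cancel, C_sub, mul_sub, sub_mul, sum_sub_distrib,
    mul_assoc, ← mul_sum]
  linear_combination (-((n + 1 : ℕ) : R[X])) * hshift

end bernsteinPolynomial

theorem hasDerivAt_sum_bernstein_mul (n : ℕ) (c : ℕ → ℂ) (x : ℝ) :
    HasDerivAt
      (fun x : ℝ => ∑ ν ∈ range (n + 1),
        (n.choose ν : ℂ) * (x : ℂ) ^ ν * (1 - (x : ℂ)) ^ (n - ν) * c ν)
      (n * ∑ ν ∈ range n,
        ((n - 1).choose ν : ℂ) * (x : ℂ) ^ ν * (1 - (x : ℂ)) ^ (n - 1 - ν) * (c (ν + 1) - c ν))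
      x := by
  set P := ∑ ν ∈ range (n + 1), bernsteinPolynomial ℂ n ν * C (c ν)
  convert (P.hasDerivAt (x : ℂ)).comp_ofReal using 1
  · ext y
    simp [P, eval_finsetSum, bernsteinPolynomial]
  · rw [bernsteinPolynomial.derivative_sum_mul_C]
    simp [eval_finsetSum, bernsteinPolynomial]

theorem intervalIntegral.integral_add_sub_integral_eq_smul_integral_comp
    {E : Type*} [NormedAddCommGroup E] [NormedSpace ℝ E] [CompleteSpace E]
    {f : ℝ → E} (hf : Continuous f) (a₀ a h : ℝ) :
    (∫ x in a₀..a + h, f x) - ∫ x in a₀..a, f x = h • ∫ ξ in (0 : ℝ)..1, f (a + h * ξ) := by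
  rw [integral_interval_sub_left (hf.intervalIntegrable _ _) (hf.intervalIntegrable _ _),
    smul_integral_comp_add_mul f h a]
  simp

theorem stmt16_general (Ψ : ℝ → ℂ) (hΨ : Continuous Ψ) (b₀' : ℝ)
    (N : ℕ) (hN : 2 ≤ N) (ε ε' : ℝ)
    (hε' : 1 - ε' = (((N : ℝ) - 1) / N) * (1 - ε)) (b : ℝ) :
    HasDerivAt
      (fun b : ℝ =>
        ∑ ν ∈ Finset.range (N + 1),
          (N.choose ν : ℂ) * (b : ℂ) ^ ν * (1 - (b : ℂ)) ^ (N - ν) *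
            ∫ x in b₀'..(b₀' + ν * (1 - ε) / N), Ψ x)
      ((1 - (ε : ℂ)) *
        ∫ ξ in (0 : ℝ)..1,
          ∑ ν ∈ Finset.range N,
            ((N - 1).choose ν : ℂ) * (b : ℂ) ^ ν * (1 - (b : ℂ)) ^ (N - 1 - ν) *
              Ψ (b₀' + (1 - ε) * ξ / N + ν * (1 - ε') / ((N : ℝ) - 1)))
      b := by
  have hN0 : (N : ℝ) ≠ 0 := mod_cast (by omega : N ≠ 0)
  have hN1 : (N : ℝ) - 1 ≠ 0 := sub_ne_zero.mpr (mod_cast (by omega : N ≠ 1))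
  have hNh : (N : ℂ) * ((1 - ε) / N : ℝ) = 1 - ε := by
    push_cast
    exact mul_div_cancel₀ _ (mod_cast hN0)
  have hdiff (ν : ℕ) :
      (∫ x in b₀'..(b₀' + (ν + 1 : ℕ) * (1 - ε) / N), Ψ x) -
          ∫ x in b₀'..(b₀' + ν * (1 - ε) / N), Ψ x =
        ((1 - ε) / N : ℝ) •
          ∫ ξ in (0 : ℝ)..1, Ψ (b₀' + (1 - ε) * ξ / N + ν * (1 - ε') / ((N : ℝ) - 1)) := by
    have harg (ξ : ℝ) : b₀' + (1 - ε) * ξ / N + ν * (1 - ε') / ((N : ℝ) - 1) =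
        b₀' + ν * (1 - ε) / N + (1 - ε) / N * ξ := by
      rw [hε']; field_simp; ring
    simp_rw [harg]
    convert intervalIntegral.integral_add_sub_integral_eq_smul_integral_comp hΨ b₀'
      (b₀' + ν * (1 - ε) / N) ((1 - ε) / N) using 3
    push_cast; ring
  convert hasDerivAt_sum_bernstein_mul N (fun ν => ∫ x in b₀'..(b₀' + ν * (1 - ε) / N), Ψ x) b
    using 1
  simp only [hdiff, Complex.real_smul]
  rw [intervalIntegral.integral_finsetSum, mul_sum, mul_sum]
  · refine sum_congr rfl fun ν _ => ?_
    rw [intervalIntegral.integral_const_mul, ← hNh]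
    ring
  · exact fun ν _ => (continuous_const.mul (hΨ.comp (by fun_prop))).intervalIntegrable _ _

theorem stmt16 (Ψ : ℝ → ℂ) (hΨ : Continuous Ψ) (b₀' : ℝ)
    (N : ℕ) (hN : 2 ≤ N) (ε ε' : ℝ) (hε : ε ∈ Set.Ico (0 : ℝ) 1)
    (hε' : 1 - ε' = (((N : ℝ) - 1) / N) * (1 - ε)) (b : ℝ) :
    HasDerivAt
      (fun b : ℝ =>
        ∑ ν ∈ Finset.range (N + 1),
          (N.choose ν : ℂ) * (b : ℂ) ^ ν * (1 - (b : ℂ)) ^ (N - ν) *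
            ∫ x in b₀'..(b₀' + ν * (1 - ε) / N), Ψ x)
      ((1 - (ε : ℂ)) *
        ∫ ξ in (0 : ℝ)..1,
          ∑ ν ∈ Finset.range N,
            ((N - 1).choose ν : ℂ) * (b : ℂ) ^ ν * (1 - (b : ℂ)) ^ (N - 1 - ν) *
              Ψ (b₀' + (1 - ε) * ξ / N + ν * (1 - ε') / ((N : ℝ) - 1)))
      b :=
  stmt16_general Ψ hΨ b₀' N hN ε ε' hε' b
end

section
/- Let C_ν(N,a) = binom(N,ν)·((1+a)/2)^{N−ν}·((1−a)/2)^ν. Then for every real a, every t, x ∈ ℝ, the sequence ψ_N(x,t) = Σ_{ν=0}^N C_ν(N,a)·exp(i(1−2ν/N)x)·exp(−i(1−2ν/N)²t) converges to exp(iax − ia²t) as N → ∞, uniformly on compact subsets of ℝ². -/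
/-!
Expanding `exp (i k x - i k² t)` in powers of `k` gives
`ψ_N(x, t) = ∑_{j,l} (i x)^j / j! * (-i t)^l / l! * M_{j+2l}(N)` with the frequency moments
`M_m(N) = ∑_ν C_ν(N, a) (1 - 2ν/N)^m`, while the limit has the same expansion with `a ^ m` in place
of `M_m(N)`. Reading `C_ν(N, a)` as the (signed) law of the number `ν` of spins `-1` among `N`
independent spins `±1` of weights `(1 ± a) / 2`, `N ^ m M_m(N)` is the `m`-th moment of their sum.
With `A = max 1 |a|`, an induction on `N` gives `|N ^ m M_m(N) - a ^ m N(N-1)⋯(N-m+1)| ≤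
A ^ m (N ^ m - N(N-1)⋯(N-m+1))`, so `|M_m(N)| ≤ A ^ m` and `M_m(N) → a ^ m`. Since
`∑ R^j / j! * R^l / l! * A^(j+2l) < ∞`, dominated convergence for series, uniformly in
`|x|, |t| ≤ R`, concludes.
-/

open Finset Filter Topology

theorem tendstoUniformlyOn_of_hasSum_of_dominated {α β ι R : Type*} [NormedRing R]
    {𝓕 : Filter β} {s : Set α} {F : β → α → R} {f : α → R} {c : α → ι → R}
    {u : β → ι → R} {v : ι → R} {d b : ι → ℝ}
    (hF : ∀ n, ∀ p ∈ s, HasSum (fun i => c p i * u n i) (F n p))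
    (hf : ∀ p ∈ s, HasSum (fun i => c p i * v i) (f p))
    (hc : ∀ p ∈ s, ∀ i, ‖c p i‖ ≤ d i) (hd : ∀ i, 0 ≤ d i)
    (hu : ∀ᶠ n in 𝓕, ∀ i, ‖u n i‖ ≤ b i) (hlim : ∀ i, Tendsto (u · i) 𝓕 (𝓝 (v i)))
    (hdb : Summable fun i => d i * b i) :
    TendstoUniformlyOn F f 𝓕 s := by
  rcases 𝓕.eq_or_neBot with rfl | _
  · simp [TendstoUniformlyOn]
  have hv (i : ι) : ‖v i‖ ≤ b i :=
    le_of_tendsto (tendsto_norm.comp (hlim i)) (hu.mono fun n hn => hn i)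
  have hdom : ∀ᶠ n in 𝓕, ∀ i, ‖d i * ‖u n i - v i‖‖ ≤ 2 * (d i * b i) := by
    filter_upwards [hu] with n hn i
    rw [Real.norm_of_nonneg (mul_nonneg (hd i) (norm_nonneg _))]
    nlinarith [norm_sub_le (u n i) (v i), hn i, hv i, hd i]
  have hδ : Tendsto (fun n => ∑' i, d i * ‖u n i - v i‖) 𝓕 (𝓝 0) := by
    have := tendsto_tsum_of_dominated_convergence (g := fun _ => (0 : ℝ)) (hdb.mul_left 2)
      (fun i => by simpa using (((hlim i).sub_const (v i)).norm).const_mul (d i)) hdom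
    rwa [tsum_zero] at this
  rw [Metric.tendstoUniformlyOn_iff]
  intro ε hε
  filter_upwards [hδ.eventually (gt_mem_nhds hε), hdom] with n hn hdomn p hp
  have hsum : Summable fun i => d i * ‖u n i - v i‖ := (hdb.mul_left 2).of_norm_bounded hdomn
  rw [dist_eq_norm']
  refine lt_of_le_of_lt
    (((hF n p hp).sub (hf p hp)).norm_le_of_bounded hsum.hasSum fun i => ?_) hn
  rw [← mul_sub]
  exact (norm_mul_le _ _).trans (mul_le_mul_of_nonneg_right (hc p hp i) (norm_nonneg _))

lemma hasSum_exp_mul_exp (z w k : ℂ) :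
    HasSum (fun jl : ℕ × ℕ => z ^ jl.1 / jl.1.factorial * (w ^ jl.2 / jl.2.factorial)
        * k ^ (jl.1 + 2 * jl.2))
      (Complex.exp (z * k) * Complex.exp (w * k ^ 2)) := by
  set f : ℕ → ℂ := fun n => (z * k) ^ n / n.factorial
  set g : ℕ → ℂ := fun n => (w * k ^ 2) ^ n / n.factorial
  have hf : HasSum f (Complex.exp (z * k)) := by
    rw [Complex.exp_eq_exp_ℂ]; exact NormedSpace.expSeries_div_hasSum_exp _
  have hg : HasSum g (Complex.exp (w * k ^ 2)) := by
    rw [Complex.exp_eq_exp_ℂ]; exact NormedSpace.expSeries_div_hasSum_exp _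
  refine (hf.mul hg (summable_mul_of_summable_norm (NormedSpace.norm_expSeries_div_summable _)
    (NormedSpace.norm_expSeries_div_summable _))).congr_fun fun jl => ?_
  simp only [f, g]
  rw [pow_add, pow_mul, mul_pow, mul_pow]
  ring

theorem Nat.succ_descFactorial_succ_eq_add (n k : ℕ) :
    (n + 1).descFactorial (k + 1) = n.descFactorial (k + 1) + (k + 1) * n.descFactorial k := by
  rw [Nat.succ_descFactorial_succ, Nat.descFactorial_succ]
  rcases le_or_gt k n with hkn | hnk
  · zify [hkn]; ring
  · simp [Nat.descFactorial_eq_zero_iff_lt.mpr hnk]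

noncomputable section

namespace Superoscillation

variable (a : ℂ)

def spinMoment (k : ℕ) : ℂ := (1 + a) / 2 + (1 - a) / 2 * (-1) ^ k

/-- `N ^ m * frequencyMoment a N m`, indexed by `(ν, N - ν)`. -/
def spinSumMoment (N m : ℕ) : ℂ :=
  ∑ ij ∈ antidiagonal N,
    (N.choose ij.1 : ℂ) * (((1 + a) / 2) ^ ij.2 * ((1 - a) / 2) ^ ij.1 * ((ij.2 : ℂ) - ij.1) ^ m)

@[simp] lemma spinMoment_zero : spinMoment a 0 = 1 := by simp [spinMoment]; ring

@[simp] lemma spinMoment_one : spinMoment a 1 = a := by simp [spinMoment]; ring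

lemma norm_spinMoment_le {A : ℝ} (hA : 1 ≤ A) (ha : ‖a‖ ≤ A) (k : ℕ) :
    ‖spinMoment a k‖ ≤ A ^ k := by
  rcases Nat.even_or_odd k with hk | hk
  · simpa [spinMoment, hk.neg_one_pow, ← add_div] using one_le_pow₀ hA
  · have : spinMoment a k = a := by simp [spinMoment, hk.neg_one_pow]; ring
    rw [this]
    exact ha.trans (le_self_pow₀ hA hk.pos.ne')

lemma spinMoment_mul_add_pow (y : ℂ) (m : ℕ) :
    (1 + a) / 2 * (y + 1) ^ m + (1 - a) / 2 * (y - 1) ^ m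
      = ∑ j ∈ range (m + 1), (m.choose j : ℂ) * spinMoment a (m - j) * y ^ j := by
  rw [sub_eq_add_neg y, add_pow, add_pow, mul_sum, mul_sum, ← sum_add_distrib]
  refine sum_congr rfl fun j _ => ?_
  simp only [spinMoment, one_pow]
  ring

lemma spinSumMoment_succ (N m : ℕ) :
    spinSumMoment a (N + 1) m = ∑ j ∈ range (m + 1),
      (m.choose j : ℂ) * spinMoment a (m - j) * spinSumMoment a N j := by
  rw [spinSumMoment, sum_antidiagonal_choose_succ_mul
    (fun i j => ((1 + a) / 2) ^ j * ((1 - a) / 2) ^ i * ((j : ℂ) - i) ^ m), ← sum_add_distrib]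
  simp only [spinSumMoment, mul_sum]
  rw [sum_comm]
  refine sum_congr rfl fun ij hij => ?_
  rw [← Nat.choose_symm_of_eq_add (mem_antidiagonal.mp hij).symm]
  calc _ = N.choose ij.1 * (((1 + a) / 2) ^ ij.2 * ((1 - a) / 2) ^ ij.1)
        * ((1 + a) / 2 * ((ij.2 : ℂ) - ij.1 + 1) ^ m
          + (1 - a) / 2 * ((ij.2 : ℂ) - ij.1 - 1) ^ m) := by
        push_cast; ring
    _ = _ := by
        rw [spinMoment_mul_add_pow, mul_sum]
        exact sum_congr rfl fun j _ => by ring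

lemma norm_le_of_norm_sub_descFactorial_le {A : ℝ} (ha : ‖a‖ ≤ A) {T : ℂ} {N m : ℕ}
    (h : ‖T - a ^ m * N.descFactorial m‖ ≤ A ^ m * ((N : ℝ) ^ m - N.descFactorial m)) :
    ‖T‖ ≤ A ^ m * (N : ℝ) ^ m := by
  have hD : ‖a ^ m * N.descFactorial m‖ ≤ A ^ m * N.descFactorial m := by
    rw [norm_mul, norm_pow, Complex.norm_natCast]
    gcongr
  calc ‖T‖ ≤ ‖T - a ^ m * N.descFactorial m‖ + ‖a ^ m * N.descFactorial m‖ :=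
        norm_le_norm_sub_add _ _
    _ ≤ _ := by linarith

/-- Among the `N ^ m` products of `m` spins, the `N.descFactorial m` products of distinct spins
contribute `a ^ m` each and the others at most `A ^ m`. -/
theorem norm_spinSumMoment_sub_le {A : ℝ} (hA : 1 ≤ A) (ha : ‖a‖ ≤ A) (N m : ℕ) :
    ‖spinSumMoment a N m - a ^ m * N.descFactorial m‖
      ≤ A ^ m * ((N : ℝ) ^ m - N.descFactorial m) := by
  induction N generalizing m with
  | zero => cases m <;> simp [spinSumMoment]
  | succ N ih =>
    cases m with
    | zero => simpa [spinSumMoment_succ] using ih 0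
    | succ k =>
      have hrec : spinSumMoment a (N + 1) (k + 1) - a ^ (k + 1) * (N + 1).descFactorial (k + 1)
          = ∑ j ∈ range k, ((k + 1).choose j : ℂ) * spinMoment a (k + 1 - j) * spinSumMoment a N j
            + (k + 1) * a * (spinSumMoment a N k - a ^ k * N.descFactorial k)
            + (spinSumMoment a N (k + 1) - a ^ (k + 1) * N.descFactorial (k + 1)) := by
        rw [spinSumMoment_succ, sum_range_succ, sum_range_succ,
          Nat.succ_descFactorial_succ_eq_add]
        simp
        ring
      have hpow : ((N : ℝ) + 1) ^ (k + 1)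
          = ∑ j ∈ range k, ((k + 1).choose j : ℝ) * N ^ j + (k + 1) * N ^ k + N ^ (k + 1) := by
        rw [add_pow, sum_range_succ, sum_range_succ]
        simp [mul_comm]
      have hsum : ‖∑ j ∈ range k,
            ((k + 1).choose j : ℂ) * spinMoment a (k + 1 - j) * spinSumMoment a N j‖
          ≤ A ^ (k + 1) * ∑ j ∈ range k, ((k + 1).choose j : ℝ) * N ^ j := by
        rw [mul_sum]
        refine (norm_sum_le _ _).trans (sum_le_sum fun j hj => ?_)
        have hjk : j ≤ k + 1 := by linarith [mem_range.mp hj]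
        rw [norm_mul, norm_mul, Complex.norm_natCast]
        calc _ ≤ ((k + 1).choose j : ℝ) * A ^ (k + 1 - j) * (A ^ j * N ^ j) := by
              gcongr
              · exact norm_spinMoment_le a hA ha _
              · exact norm_le_of_norm_sub_descFactorial_le a ha (ih j)
          _ = _ := by rw [← pow_sub_mul_pow A hjk]; ring
      calc _ ≤ A ^ (k + 1) * ∑ j ∈ range k, ((k + 1).choose j : ℝ) * N ^ j
              + (k + 1) * A * (A ^ k * ((N : ℝ) ^ k - N.descFactorial k))
              + A ^ (k + 1) * ((N : ℝ) ^ (k + 1) - N.descFactorial (k + 1)) := by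
            rw [hrec]
            refine (norm_add₃_le).trans (add_le_add_three hsum ?_ (ih (k + 1)))
            rw [norm_mul, norm_mul]
            gcongr
            · norm_cast
            · exact ih k
        _ = _ := by
            rw [Nat.succ_descFactorial_succ_eq_add]
            push_cast
            rw [hpow]
            ring

def superoscCoeff (N ν : ℕ) : ℂ := N.choose ν * ((1 + a) / 2) ^ (N - ν) * ((1 - a) / 2) ^ ν

def frequencyMoment (N m : ℕ) : ℂ :=
  ∑ ν ∈ range (N + 1), superoscCoeff a N ν * (1 - 2 * (ν : ℂ) / N) ^ m

lemma frequencyMoment_eq_div {N : ℕ} (hN : N ≠ 0) (m : ℕ) :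
    frequencyMoment a N m = spinSumMoment a N m / (N : ℂ) ^ m := by
  rw [spinSumMoment, Nat.sum_antidiagonal_eq_sum_range_succ
    (fun i j => (N.choose i : ℂ) * (((1 + a) / 2) ^ j * ((1 - a) / 2) ^ i * ((j : ℂ) - i) ^ m)),
    sum_div]
  refine sum_congr rfl fun ν hν => ?_
  have hνN : ν ≤ N := Nat.lt_succ_iff.mp (mem_range.mp hν)
  have hk : (1 - 2 * (ν : ℂ) / N) ^ m = ((N : ℂ) - ν - ν) ^ m / (N : ℂ) ^ m := by
    rw [← div_pow]; field_simp; ring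
  rw [superoscCoeff, Nat.cast_sub hνN, hk]
  ring

lemma norm_frequencyMoment_le {A : ℝ} (hA : 1 ≤ A) (ha : ‖a‖ ≤ A) {N : ℕ} (hN : N ≠ 0)
    (m : ℕ) : ‖frequencyMoment a N m‖ ≤ A ^ m := by
  have hN' : (0 : ℝ) < (N : ℝ) ^ m := by positivity
  rw [frequencyMoment_eq_div a hN, norm_div, norm_pow, Complex.norm_natCast, div_le_iff₀ hN']
  exact norm_le_of_norm_sub_descFactorial_le a ha (norm_spinSumMoment_sub_le a hA ha N m)

lemma norm_frequencyMoment_sub_le {A : ℝ} (hA : 1 ≤ A) (ha : ‖a‖ ≤ A) {N : ℕ} (hN : N ≠ 0)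
    (m : ℕ) :
    ‖frequencyMoment a N m - a ^ m‖ ≤ 2 * A ^ m * (1 - N.descFactorial m / (N : ℝ) ^ m) := by
  have hN' : (0 : ℝ) < (N : ℝ) ^ m := by positivity
  have hD : (N.descFactorial m : ℝ) ≤ (N : ℝ) ^ m := by exact_mod_cast N.descFactorial_le_pow m
  have hsplit : frequencyMoment a N m - a ^ m
      = (spinSumMoment a N m - a ^ m * N.descFactorial m) / (N : ℂ) ^ m
        - a ^ m * (1 - N.descFactorial m / (N : ℂ) ^ m) := by
    rw [frequencyMoment_eq_div a hN]
    field_simp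
    ring
  have hmain : ‖(spinSumMoment a N m - a ^ m * N.descFactorial m) / (N : ℂ) ^ m‖
      ≤ A ^ m * (1 - N.descFactorial m / (N : ℝ) ^ m) := by
    rw [norm_div, norm_pow, Complex.norm_natCast, div_le_iff₀ hN']
    refine (norm_spinSumMoment_sub_le a hA ha N m).trans_eq ?_
    rw [mul_assoc, one_sub_mul, div_mul_cancel₀ _ hN'.ne']
  have hcorr : ‖a ^ m * (1 - N.descFactorial m / (N : ℂ) ^ m)‖
      ≤ A ^ m * (1 - N.descFactorial m / (N : ℝ) ^ m) := by
    have hr : 0 ≤ 1 - N.descFactorial m / (N : ℝ) ^ m := by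
      rwa [sub_nonneg, div_le_one hN']
    have hcast : (1 - N.descFactorial m / (N : ℂ) ^ m)
        = ((1 - N.descFactorial m / (N : ℝ) ^ m : ℝ) : ℂ) := by
      push_cast; rfl
    rw [norm_mul, norm_pow, hcast, Complex.norm_of_nonneg hr]
    gcongr
  rw [hsplit]
  linarith [norm_sub_le ((spinSumMoment a N m - a ^ m * N.descFactorial m) / (N : ℂ) ^ m)
    (a ^ m * (1 - N.descFactorial m / (N : ℂ) ^ m))]

theorem tendsto_frequencyMoment (m : ℕ) :
    Tendsto (fun N => frequencyMoment a N m) atTop (𝓝 (a ^ m)) := by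
  have hA : 1 ≤ max 1 ‖a‖ := le_max_left _ _
  have ha : ‖a‖ ≤ max 1 ‖a‖ := le_max_right _ _
  have hratio : Tendsto (fun N : ℕ => (N.descFactorial m : ℝ) / (N : ℝ) ^ m) atTop (𝓝 1) :=
    (Asymptotics.isEquivalent_iff_tendsto_one ((eventually_ne_atTop 0).mono fun N hN => by
      positivity)).mp (isEquivalent_descFactorial m)
  have hbound : Tendsto (fun N : ℕ => 2 * max 1 ‖a‖ ^ m * (1 - N.descFactorial m / (N : ℝ) ^ m))
      atTop (𝓝 0) := by
    simpa using (hratio.const_sub 1).const_mul (2 * max 1 ‖a‖ ^ m)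
  rw [tendsto_iff_norm_sub_tendsto_zero]
  exact squeeze_zero' (Eventually.of_forall fun N => norm_nonneg _)
    ((eventually_ne_atTop 0).mono fun N hN => norm_frequencyMoment_sub_le a hA ha hN m) hbound

def freeSolution (N : ℕ) (x t : ℂ) : ℂ :=
  ∑ ν ∈ range (N + 1), superoscCoeff a N ν * Complex.exp (Complex.I * (1 - 2 * (ν : ℂ) / N) * x)
    * Complex.exp (-Complex.I * (1 - 2 * (ν : ℂ) / N) ^ 2 * t)

lemma hasSum_freeSolution (N : ℕ) (x t : ℂ) :
    HasSum (fun jl : ℕ × ℕ => (Complex.I * x) ^ jl.1 / jl.1.factorial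
        * ((-Complex.I * t) ^ jl.2 / jl.2.factorial) * frequencyMoment a N (jl.1 + 2 * jl.2))
      (freeSolution a N x t) := by
  have h := hasSum_sum fun ν (_ : ν ∈ range (N + 1)) =>
    (hasSum_exp_mul_exp (Complex.I * x) (-Complex.I * t) (1 - 2 * (ν : ℂ) / N)).mul_left
      (superoscCoeff a N ν)
  have hψ : freeSolution a N x t = ∑ ν ∈ range (N + 1), superoscCoeff a N ν
      * (Complex.exp (Complex.I * x * (1 - 2 * (ν : ℂ) / N))
        * Complex.exp (-Complex.I * t * (1 - 2 * (ν : ℂ) / N) ^ 2)) :=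
    sum_congr rfl fun ν _ => by ring_nf
  rw [hψ]
  refine h.congr_fun fun jl => ?_
  rw [frequencyMoment, mul_sum]
  exact sum_congr rfl fun ν _ => by ring

theorem tendstoUniformlyOn_freeSolution {s : Set (ℂ × ℂ)} (hs : Bornology.IsBounded s) :
    TendstoUniformlyOn (fun N p => freeSolution a N p.1 p.2)
      (fun p => Complex.exp (Complex.I * a * p.1 - Complex.I * a ^ 2 * p.2)) atTop s := by
  obtain ⟨R, hR0, hR⟩ := hs.exists_pos_norm_le
  obtain ⟨A, hA, ha⟩ : ∃ A : ℝ, 1 ≤ A ∧ ‖a‖ ≤ A := ⟨_, le_max_left 1 _, le_max_right _ _⟩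
  have hlimit (p : ℂ × ℂ) : Complex.exp (Complex.I * a * p.1 - Complex.I * a ^ 2 * p.2)
      = Complex.exp (Complex.I * p.1 * a) * Complex.exp (-Complex.I * p.2 * a ^ 2) := by
    rw [← Complex.exp_add]; ring_nf
  refine tendstoUniformlyOn_of_hasSum_of_dominated
    (c := fun (p : ℂ × ℂ) (jl : ℕ × ℕ) => (Complex.I * p.1) ^ jl.1 / jl.1.factorial
        * ((-Complex.I * p.2) ^ jl.2 / jl.2.factorial))
    (u := fun (N : ℕ) (jl : ℕ × ℕ) => frequencyMoment a N (jl.1 + 2 * jl.2))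
    (v := fun jl : ℕ × ℕ => a ^ (jl.1 + 2 * jl.2))
    (d := fun jl : ℕ × ℕ => R ^ jl.1 / jl.1.factorial * (R ^ jl.2 / jl.2.factorial))
    (b := fun jl : ℕ × ℕ => A ^ (jl.1 + 2 * jl.2))
    (fun N p _ => hasSum_freeSolution a N p.1 p.2)
    (fun p _ => by rw [hlimit]; exact hasSum_exp_mul_exp _ _ _) (fun p hp jl => ?_)
    (fun jl => by positivity)
    ((eventually_ne_atTop 0).mono fun N hN jl => norm_frequencyMoment_le a hA ha hN _)
    (fun jl => tendsto_frequencyMoment a _) ?_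
  · have hx : ‖p.1‖ ≤ R := (norm_fst_le p).trans (hR p hp)
    have ht : ‖p.2‖ ≤ R := (norm_snd_le p).trans (hR p hp)
    simp only [norm_mul, norm_div, norm_pow, norm_neg, Complex.norm_I, one_mul,
      Complex.norm_natCast]
    gcongr
  · refine ((Real.summable_pow_div_factorial (R * A)).mul_of_nonneg
      (Real.summable_pow_div_factorial (R * A ^ 2)) (fun _ => by positivity)
      (fun _ => by positivity)).congr fun jl => ?_
    rw [pow_add, pow_mul, mul_pow, mul_pow]
    ring

end Superoscillation

open Superoscillation

theorem stmt18 (a : ℝ) (K : Set (ℝ × ℝ)) (hK : IsCompact K) :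
    TendstoUniformlyOn
      (fun (N : ℕ) (p : ℝ × ℝ) =>
        ∑ ν ∈ Finset.range (N + 1),
          (N.choose ν : ℂ) * ((1 + (a : ℂ)) / 2) ^ (N - ν) * ((1 - (a : ℂ)) / 2) ^ ν *
            Complex.exp (Complex.I * (1 - 2 * (ν : ℂ) / (N : ℂ)) * (p.1 : ℂ)) *
            Complex.exp (-Complex.I * (1 - 2 * (ν : ℂ) / (N : ℂ)) ^ 2 * (p.2 : ℂ)))
      (fun p =>
        Complex.exp (Complex.I * (a : ℂ) * (p.1 : ℂ) -
          Complex.I * (a : ℂ) ^ 2 * (p.2 : ℂ)))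
      Filter.atTop K := by
  let g : ℝ × ℝ → ℂ × ℂ := fun p => (p.1, p.2)
  have hg : Continuous g := by fun_prop
  exact ((tendstoUniformlyOn_freeSolution a (hK.image hg).isBounded).comp g).mono
    (Set.subset_preimage_image g K)
end
end
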